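/- arXiv:2505.00844 — 4 statements merged into one kernel-verified Lean document; each statement's English description precedes it below -/
import Mathlib

section
/- Suppose A ⊆_TV B are subsets of an L-structure N, c̄ is a finite tuple from N, and tp(c̄/A) is isolated. Then A ∪ range(c̄) is a Tarski–Vaught subset of B ∪ range(c̄), i.e., A c̄ ⊆_TV B c̄. -/
open FirstOrder FirstOrder.Language

/-- `A` is a Tarski–Vaught subset of `B` in the `L`-structure `N`: `A ⊆ B`, and every
`L`-formula `φ(x, ȳ)` with parameters from `A` that has a solution in `B` has a solution
in `A`. -/
def IsTVSubset (L : FirstOrder.Language) (N : Type*) [L.Structure N] (A B : Set N) : Prop :=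
  A ⊆ B ∧ ∀ (n : ℕ) (φ : L.Formula (Fin (n + 1))) (a : Fin n → N),
    (∀ i, a i ∈ A) → (∃ b ∈ B, φ.Realize (Fin.cons b a)) →
      ∃ a' ∈ A, φ.Realize (Fin.cons a' a)

/-- The formula `ψ(x̄, ā)`, with parameters `ā` from `A`, isolates `tp(c̄/A)`. -/
def FormulaIsolates (L : FirstOrder.Language) (N : Type*) [L.Structure N] (A : Set N)
    {k m : ℕ} (c : Fin k → N) (ψ : L.Formula (Fin k ⊕ Fin m)) (a : Fin m → N) : Prop :=
  (∀ i, a i ∈ A) ∧ ψ.Realize (Sum.elim c a) ∧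
    ∀ (m' : ℕ) (φ : L.Formula (Fin k ⊕ Fin m')) (a' : Fin m' → N),
      (∀ i, a' i ∈ A) → φ.Realize (Sum.elim c a') →
        ∀ x : Fin k → N, ψ.Realize (Sum.elim x a) → φ.Realize (Sum.elim x a')

/-!
Write the parameters of `φ(x, ā)` as `ē` from `A` together with entries of `c̄`, and let
`ψ(ȳ, ā₀)` isolate `tp(c̄/A)`. If `b ∈ B` satisfies `φ(b, ē, c̄)`, then `b` satisfies the
`A`-formula `∃ ȳ, ψ(ȳ, ā₀) ∧ φ(x, ē, ȳ)`, so by `A ⊆_TV B` some `a' ∈ A` does, with a witness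
`d̄`. As `d̄` realizes `ψ`, it has the same type over `A` as `c̄`, and this type contains
`φ(a', ē, ȳ)`; hence `φ(a', ē, c̄)`.
-/

section

variable {L : FirstOrder.Language} {N : Type*} [L.Structure N] {A B : Set N}

theorem IsTVSubset.exists_mem_realize (hTV : IsTVSubset L N A B) {β : Type*} [Finite β]
    (φ : L.Formula (Option β)) {e : β → N} (he : ∀ i, e i ∈ A) {b : N} (hb : b ∈ B)
    (hφ : φ.Realize (Option.elim' b e)) : ∃ a ∈ A, φ.Realize (Option.elim' a e) := by
  obtain ⟨n, ⟨σ⟩⟩ := Finite.exists_equiv_fin β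
  let g : Option β → Fin (n + 1) := Option.elim' 0 fun i => (σ i).succ
  have hg : ∀ x : N, (Fin.cons x (e ∘ σ.symm) : Fin (n + 1) → N) ∘ g = Option.elim' x e := by
    intro x
    funext o
    cases o <;> simp [g]
  obtain ⟨a, ha, hφa⟩ := hTV.2 n (φ.relabel g) (e ∘ σ.symm) (fun i => he _)
    ⟨b, hb, by rwa [Formula.realize_relabel, hg]⟩
  exact ⟨a, ha, by rwa [Formula.realize_relabel, hg] at hφa⟩

namespace FormulaIsolates

variable {k m : ℕ} {c : Fin k → N} {ψ : L.Formula (Fin k ⊕ Fin m)} {a : Fin m → N}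

theorem realize_of_realize (hiso : FormulaIsolates L N A c ψ a) {β : Type*} [Finite β]
    (θ : L.Formula (Fin k ⊕ β)) {e : β → N} (he : ∀ i, e i ∈ A)
    (hθ : θ.Realize (Sum.elim c e)) {x : Fin k → N} (hx : ψ.Realize (Sum.elim x a)) :
    θ.Realize (Sum.elim x e) := by
  obtain ⟨n, ⟨σ⟩⟩ := Finite.exists_equiv_fin β
  have hσ : ∀ y : Fin k → N, Sum.elim y (e ∘ σ.symm) ∘ Sum.map id σ = Sum.elim y e := by
    intro y
    funext j
    cases j <;> simp
  have := hiso.2.2 n (θ.relabel (Sum.map id σ)) (e ∘ σ.symm) (fun i => he _)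
    (by rwa [Formula.realize_relabel, hσ]) x hx
  rwa [Formula.realize_relabel, hσ] at this

theorem realize_iff (hiso : FormulaIsolates L N A c ψ a) {β : Type*} [Finite β]
    (θ : L.Formula (Fin k ⊕ β)) {e : β → N} (he : ∀ i, e i ∈ A) {x : Fin k → N}
    (hx : ψ.Realize (Sum.elim x a)) :
    θ.Realize (Sum.elim x e) ↔ θ.Realize (Sum.elim c e) := by
  refine ⟨fun hθx => ?_, fun hθc => hiso.realize_of_realize θ he hθc hx⟩
  by_contra hθc
  exact hiso.realize_of_realize θ.not he hθc hx hθx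

end FormulaIsolates

theorem IsTVSubset.exists_mem_realize_of_isolates (hTV : IsTVSubset L N A B) {k m : ℕ}
    {c : Fin k → N} {ψ : L.Formula (Fin k ⊕ Fin m)} {a₀ : Fin m → N}
    (hiso : FormulaIsolates L N A c ψ a₀) {β : Type*} [Finite β]
    (θ : L.Formula (Fin k ⊕ Option β)) {e : β → N} (he : ∀ i, e i ∈ A) {b : N} (hb : b ∈ B)
    (hθ : θ.Realize (Sum.elim c (Option.elim' b e))) :
    ∃ a ∈ A, θ.Realize (Sum.elim c (Option.elim' a e)) := by
  let χ : L.Formula (Option (β ⊕ Fin m)) :=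
    (ψ.relabel (Sum.elim Sum.inr (Sum.inl ∘ some ∘ Sum.inr)) ⊓
      θ.relabel (Sum.elim Sum.inr (Sum.inl ∘ Option.map Sum.inl))).iExs (Fin k)
  have hχ : ∀ x : N, χ.Realize (Option.elim' x (Sum.elim e a₀)) ↔
      ∃ d : Fin k → N, ψ.Realize (Sum.elim d a₀) ∧ θ.Realize (Sum.elim d (Option.elim' x e)) := by
    intro x
    simp only [χ, Formula.realize_iExs, Formula.realize_inf, Formula.realize_relabel]
    refine exists_congr fun d => and_congr (iff_of_eq (congrArg _ ?_)) (iff_of_eq (congrArg _ ?_))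
    · funext j
      rcases j with j | j <;> rfl
    · funext j
      rcases j with j | _ | j <;> rfl
  obtain ⟨a, ha, hχa⟩ := hTV.exists_mem_realize χ (Sum.forall.2 ⟨he, hiso.1⟩) hb
    ((hχ b).2 ⟨c, hiso.2.1, hθ⟩)
  obtain ⟨d, hψd, hθd⟩ := (hχ a).1 hχa
  exact ⟨a, ha, (hiso.realize_iff θ (Option.forall.2 ⟨ha, he⟩) hψd).1 hθd⟩

theorem exists_sum_elim_comp_eq_of_mem_union_range {ι κ : Type*} {c : κ → N} {a : ι → N}
    (ha : ∀ i, a i ∈ A ∪ Set.range c) :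
    ∃ s : ι → κ ⊕ {i // a i ∈ A}, Sum.elim c (fun i => a i.1) ∘ s = a := by
  have : ∀ i, ∃ x : κ ⊕ {i // a i ∈ A}, Sum.elim c (fun i => a i.1) x = a i := by
    intro i
    rcases ha i with hi | ⟨j, hj⟩
    exacts [⟨.inr ⟨i, hi⟩, rfl⟩, ⟨.inl j, hj⟩]
  choose s hs using this
  exact ⟨s, funext hs⟩

end

/-- If `A ⊆_TV B` and `tp(c̄/A)` is isolated, then `A c̄ ⊆_TV B c̄`. -/
theorem tv_extend_by_isolated {L : FirstOrder.Language} {N : Type*} [L.Structure N]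
    {A B : Set N} (hTV : IsTVSubset L N A B) {k : ℕ} (c : Fin k → N)
    (h : ∃ (m : ℕ) (ψ : L.Formula (Fin k ⊕ Fin m)) (a : Fin m → N),
      FormulaIsolates L N A c ψ a) :
    IsTVSubset L N (A ∪ Set.range c) (B ∪ Set.range c) := by
  obtain ⟨m, ψ, a₀, hiso⟩ := h
  refine ⟨Set.union_subset_union_left _ hTV.1, ?_⟩
  rintro n φ a ha ⟨b, hbB | hbc, hφ⟩
  · obtain ⟨s, hs⟩ := exists_sum_elim_comp_eq_of_mem_union_range ha
    let θ : L.Formula (Fin k ⊕ Option {i // a i ∈ A}) :=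
      φ.relabel (Fin.cons (.inr none) (Sum.map id some ∘ s))
    have hθ : ∀ x, θ.Realize (Sum.elim c (Option.elim' x fun i => a i.1)) ↔
        φ.Realize (Fin.cons x a) := by
      intro x
      rw [Formula.realize_relabel]
      refine iff_of_eq (congrArg _ (funext fun j => Fin.cases rfl (fun i => ?_) j))
      simp only [Function.comp_apply, Fin.cons_succ, ← congrFun hs i]
      rcases s i with j | j <;> rfl
    obtain ⟨a', ha', hθa'⟩ :=
      hTV.exists_mem_realize_of_isolates hiso θ (fun i => i.2) hbB ((hθ b).2 hφ)
    exact ⟨a', .inl ha', (hθ a').1 hθa'⟩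
  · exact ⟨b, .inr hbc, hφ⟩
end

section
/- Let N be an L-structure and (M_n)_{n∈ω} an increasing chain of countable substructures of N whose union is all of N, and suppose that for every n ∈ ω and every finite tuple ā from M_n there is an L-isomorphism f : M_n ≅ M_{n+1} with f(a) = a for every entry a of ā (where M_n is viewed as a substructure of M_{n+1}). Then for every n ∈ ω and every finite tuple ā from M_n there is an L-isomorphism g : M_n ≅ N with g(a) = a for every entry a of ā. (This is the paper's Lemma that M_n ≼_{∞,ω} M* for the union M* of a ≼_{∞,ω}-chain of countable models, using that for countable structures, back-and-forth equivalence over a finite tuple coincides with the existence of an isomorphism fixing that tuple.) -/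
/-!
Back-and-forth between `M n` and `N`, through the finitely generated partial maps that are
restrictions of an isomorphism of `M n` onto some `M m`. Forth, such a restriction is simply
enlarged. Back, a point `y` of `N` lies in some `M m'` with `m' ≥ m`; iterating the hypothesis
gives an isomorphism `M m ≃ M m'` fixing the finitely generated image of the partial map, and
composing with it yields an isomorphism `M n ≃ M m'` that still extends the partial map and has
`y` in its range. Countability of `M n` and `N` lets the back-and-forth sequence exhaust both.
-/

open FirstOrder FirstOrder.Language Substructure

namespace FirstOrder.Language

variable {L : Language} {M N : Type*} [L.Structure M] [L.Structure N]

namespace Embedding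

theorem le_toPartialEquiv_iff {f : M ≃ₚ[L] N} {F : M ↪[L] N} :
    f ≤ F.toPartialEquiv ↔ ∀ x : f.dom, F x = f.toEquiv x := by
  rw [PartialEquiv.le_def]
  exact ⟨fun ⟨_, hF⟩ x => DFunLike.congr_fun hF x, fun hF => ⟨le_top, Embedding.ext hF⟩⟩

theorem eqOn_dom_of_le_toPartialEquiv {f : M ≃ₚ[L] N} {F G : M ↪[L] N}
    (hF : f ≤ F.toPartialEquiv) (hG : f ≤ G.toPartialEquiv) : Set.EqOn F G f.dom :=
  fun x hx => (le_toPartialEquiv_iff.1 hF ⟨x, hx⟩).trans (le_toPartialEquiv_iff.1 hG ⟨x, hx⟩).symm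

theorem le_toPartialEquiv_of_eqOn {f : M ≃ₚ[L] N} {F G : M ↪[L] N} {s : Set M}
    (hF : f ≤ F.toPartialEquiv) (hs : closure L s = f.dom) (hFG : Set.EqOn F G s) :
    f ≤ G.toPartialEquiv := by
  rw [le_toPartialEquiv_iff] at hF ⊢
  intro x
  have hx : (x : M) ∈ closure L s := hs.symm ▸ x.2
  rw [← hF x]
  exact (Hom.eqOn_closure (f := F.toHom) (g := G.toHom) hFG hx).symm

theorem exists_fg_le_toPartialEquiv_mem_dom {f : M ≃ₚ[L] N} {F : M ↪[L] N}
    (hf : f.dom.FG) (hF : f ≤ F.toPartialEquiv) (x : M) :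
    ∃ g : M ≃ₚ[L] N, g.dom.FG ∧ g ≤ F.toPartialEquiv ∧ x ∈ g.dom ∧ f ≤ g :=
  have hA : f.dom ⊔ closure L {x} ≤ F.toPartialEquiv.dom := le_top
  ⟨_, hf.sup (fg_closure_singleton x), PartialEquiv.domRestrict_le _ hA,
    le_sup_right (a := f.dom) (subset_closure rfl),
    PartialEquiv.le_domRestrict _ _ le_sup_left hA hF⟩

end Embedding

namespace PartialEquiv

theorem exists_equiv_le_of_forth_back [Countable M] [Countable N] {P : Set (M ≃ₚ[L] N)}
    (forth : ∀ f ∈ P, ∀ x : M, ∃ g ∈ P, x ∈ g.dom ∧ f ≤ g)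
    (back : ∀ f ∈ P, ∀ y : N, ∃ g ∈ P, y ∈ g.cod ∧ f ≤ g) {f : M ≃ₚ[L] N} (hf : f ∈ P) :
    ∃ e : M ≃[L] N, f ≤ e.toEmbedding.toPartialEquiv := by
  have := Encodable.ofCountable (M ⊕ N)
  let D : M ⊕ N → Order.Cofinal P := Sum.elim
    (fun x => ⟨{g | x ∈ g.1.dom}, fun g => by
      obtain ⟨h, hP, hx, hgh⟩ := forth g.1 g.2 x
      exact ⟨⟨h, hP⟩, hx, hgh⟩⟩)
    (fun y => ⟨{g | y ∈ g.1.cod}, fun g => by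
      obtain ⟨h, hP, hy, hgh⟩ := back g.1 g.2 y
      exact ⟨⟨h, hP⟩, hy, hgh⟩⟩)
  let S : ℕ →o M ≃ₚ[L] N := ⟨Subtype.val ∘ Order.sequenceOfCofinals ⟨f, hf⟩ D,
    (Subtype.mono_coe _).comp (Order.sequenceOfCofinals.monotone _ _)⟩
  have dom_top : (DirectLimit.partialEquivLimit S).dom = ⊤ :=
    eq_top_iff.2 fun x _ => dom_le_dom
      (DirectLimit.le_partialEquivLimit S (Encodable.encode (Sum.inl x : M ⊕ N) + 1))
      (Order.sequenceOfCofinals.encode_mem _ D (.inl x))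
  have cod_top : (DirectLimit.partialEquivLimit S).cod = ⊤ :=
    eq_top_iff.2 fun y _ => cod_le_cod
      (DirectLimit.le_partialEquivLimit S (Encodable.encode (Sum.inr y : M ⊕ N) + 1))
      (Order.sequenceOfCofinals.encode_mem _ D (.inr y))
  refine ⟨toEquivOfEqTop dom_top cod_top, ?_⟩
  rw [toEquivOfEqTop_toEmbedding, Embedding.toPartialEquiv_toEmbedding]
  exact DirectLimit.le_partialEquivLimit S 0

end PartialEquiv

end FirstOrder.Language

section Chain

variable {L : FirstOrder.Language} {N : Type*} [L.Structure N] {M : ℕ → L.Substructure N}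

theorem exists_equiv_fixing_of_le
    (hstep : ∀ (n k : ℕ) (a : Fin k → M n),
      ∃ f : (M n) ≃[L] (M (n + 1)), ∀ i, (f (a i) : N) = (a i : N))
    {m m' : ℕ} (h : m ≤ m') {k : ℕ} (b : Fin k → M m) :
    ∃ e : M m ≃[L] M m', ∀ i, (e (b i) : N) = b i := by
  induction m', h using Nat.le_induction with
  | base => exact ⟨Language.Equiv.refl L _, fun _ => rfl⟩
  | succ m' _ ih =>
    obtain ⟨e, he⟩ := ih
    obtain ⟨f, hf⟩ := hstep m' k (e ∘ b)
    exact ⟨f.comp e, fun i => (hf i).trans (he i)⟩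

variable (M) in
def chainPartialEquivs (n : ℕ) : Set (M n ≃ₚ[L] N) :=
  {f | f.dom.FG ∧
    ∃ (m : ℕ) (e : M n ≃[L] M m), f ≤ ((M m).subtype.comp e.toEmbedding).toPartialEquiv}

theorem exists_ge_mem_dom_of_mem_chainPartialEquivs {n : ℕ} {f : M n ≃ₚ[L] N}
    (hf : f ∈ chainPartialEquivs M n) (x : M n) :
    ∃ g ∈ chainPartialEquivs M n, x ∈ g.dom ∧ f ≤ g := by
  obtain ⟨hf_fg, m, e, hfe⟩ := hf
  obtain ⟨g, hg_fg, hge, hx, hfg⟩ := Embedding.exists_fg_le_toPartialEquiv_mem_dom hf_fg hfe x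
  exact ⟨g, ⟨hg_fg, m, e, hge⟩, hx, hfg⟩

theorem exists_ge_mem_cod_of_mem_chainPartialEquivs (hmono : Monotone M)
    (hunion : ∀ y : N, ∃ n, y ∈ M n)
    (hstep : ∀ (n k : ℕ) (a : Fin k → M n),
      ∃ f : (M n) ≃[L] (M (n + 1)), ∀ i, (f (a i) : N) = (a i : N))
    {n : ℕ} {f : M n ≃ₚ[L] N} (hf : f ∈ chainPartialEquivs M n)
    (y : N) : ∃ g ∈ chainPartialEquivs M n, y ∈ g.cod ∧ f ≤ g := by
  obtain ⟨hf_fg, m, e, hfe⟩ := hf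
  obtain ⟨k, a, ha⟩ := fg_iff_exists_fin_generating_family.1 hf_fg
  obtain ⟨m₀, hy⟩ := hunion y
  obtain ⟨e', he'⟩ := exists_equiv_fixing_of_le hstep (le_max_left m m₀) (e ∘ a)
  have hfe' : f ≤ ((M _).subtype.comp (e'.comp e).toEmbedding).toPartialEquiv :=
    Embedding.le_toPartialEquiv_of_eqOn hfe ha (Set.forall_mem_range.2 fun i => (he' i).symm)
  set x : M n := (e'.comp e).symm ⟨y, hmono (le_max_right m m₀) hy⟩
  obtain ⟨g, hg_fg, hge, hx, hfg⟩ := Embedding.exists_fg_le_toPartialEquiv_mem_dom hf_fg hfe' x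
  have hgx : (g.toEquiv ⟨x, hx⟩ : N) = y := by
    rw [← Embedding.le_toPartialEquiv_iff.1 hge ⟨x, hx⟩]
    simp [x]
  exact ⟨g, ⟨hg_fg, _, e'.comp e, hge⟩, hgx ▸ (g.toEquiv ⟨x, hx⟩).2, hfg⟩

end Chain

/-- Let `(M_n)_{n∈ω}` be an increasing chain of countable substructures of `N` whose union is
all of `N`.  If for every `n` and every finite tuple `ā` from `M_n` there is an isomorphism
`M_n ≅ M_{n+1}` fixing `ā` pointwise, then for every `n` and every finite tuple `ā` from `M_n`
there is an isomorphism `M_n ≅ N` fixing `ā` pointwise. -/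
theorem chain_iso_union {L : FirstOrder.Language} {N : Type*} [L.Structure N]
    (M : ℕ → L.Substructure N) (hmono : Monotone M)
    (hcount : ∀ n, Countable (M n))
    (hunion : ∀ x : N, ∃ n, x ∈ M n)
    (hstep : ∀ (n k : ℕ) (a : Fin k → M n),
      ∃ f : (M n) ≃[L] (M (n + 1)), ∀ i, (f (a i) : N) = (a i : N)) :
    ∀ (n k : ℕ) (a : Fin k → M n),
      ∃ g : (M n) ≃[L] N, ∀ i, (g (a i) : N) = (a i : N) := by
  intro n k a
  have : Countable N := Function.Surjective.countable (f := fun x : Σ m, M m => (x.2 : N))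
    fun y => (hunion y).elim fun m hy => ⟨⟨m, y, hy⟩, rfl⟩
  have hA : closure L (Set.range a) ≤ (M n).subtype.toPartialEquiv.dom := le_top
  have hf₀ : (M n).subtype.toPartialEquiv.domRestrict hA ∈ chainPartialEquivs M n :=
    ⟨fg_closure (Set.finite_range a), n, Language.Equiv.refl L _, PartialEquiv.domRestrict_le _ hA⟩
  obtain ⟨g, hg⟩ := PartialEquiv.exists_equiv_le_of_forth_back
    (fun _ hf x => exists_ge_mem_dom_of_mem_chainPartialEquivs hf x)
    (fun _ hf y => exists_ge_mem_cod_of_mem_chainPartialEquivs hmono hunion hstep hf y) hf₀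
  exact ⟨g, fun i => Embedding.eqOn_dom_of_le_toPartialEquiv hg
    (PartialEquiv.domRestrict_le _ hA) (subset_closure (Set.mem_range_self i))⟩
end

section
/- Let β be an ordinal and (M_α)_{α≤β} a continuous increasing chain of countable L-structures (meaning M_α ⊆ M_{α'} for α ≤ α', and M_γ = ⋃_{α<γ} M_α for every limit ordinal γ ≤ β), and suppose that for every α < β and every finite tuple ā from M_α there is an L-isomorphism f : M_α ≅ M_{α+1} with f(a) = a for every entry a of ā. Then for every α ≤ β and every finite tuple ā from M_α there is an L-isomorphism g : M_α ≅ M_β with g(a) = a for every entry a of ā. (This is the transfinite chain principle for ≼_{∞,ω} among countable structures used in the proof of the paper's Proposition that a dull pair of countable models M ≼ N satisfies M ≅_A N.) -/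
/-!
Induct on the top of the chain; successor steps compose isomorphisms. At a limit `γ`, where
`M γ` is the union of the earlier stages, run a back-and-forth between the countable structures
`M α` and `M γ` along finitely generated partial isomorphisms that are restrictions of an
isomorphism of `M α` onto some earlier stage `M ε`, `ε < γ`. Going forth only enlarges the
domain. To go back to some `y ∈ M ρ`, first pass to `ε' = max ε ρ` by an isomorphism
`M ε ≃ M ε'` fixing the finitely generated image of the current map, then enlarge the domain
by the preimage of `y`.
-/

open FirstOrder FirstOrder.Language

namespace FirstOrder.Language

variable {L : Language}

namespace PartialEquiv

open Substructure

variable {M N : Type*} [L.Structure M] [L.Structure N]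

theorem le_toPartialEquiv_iff {f : M ≃ₚ[L] N} {e : M ↪[L] N} :
    f ≤ e.toPartialEquiv ↔ ∀ x : f.dom, e x = f.toEquiv x := by
  constructor
  · intro h x
    exact congrArg Subtype.val (toEquiv_inclusion_apply h x)
  · intro h
    have cod_le : f.cod ≤ e.toPartialEquiv.cod := fun y hy ↦ by
      obtain ⟨x, hx⟩ := f.toEquiv.surjective ⟨y, hy⟩
      exact ⟨x, (h x).trans (congrArg Subtype.val hx)⟩
    exact le_iff.2 ⟨le_top, cod_le, fun x ↦ Subtype.ext (h x).symm⟩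

theorem apply_mem_cod_of_le_toPartialEquiv {f : M ≃ₚ[L] N} {e : M ↪[L] N}
    (hf : f ≤ e.toPartialEquiv) {m : M} (hm : m ∈ f.dom) : e m ∈ f.cod := by
  rw [le_toPartialEquiv_iff.1 hf ⟨m, hm⟩]
  exact (f.toEquiv ⟨m, hm⟩).2

theorem exists_fg_le_le_toPartialEquiv_mem_dom {f : M ≃ₚ[L] N} {e : M ↪[L] N}
    (hfg : f.dom.FG) (hf : f ≤ e.toPartialEquiv) (m : M) :
    ∃ g : M ≃ₚ[L] N, g.dom.FG ∧ f ≤ g ∧ g ≤ e.toPartialEquiv ∧ m ∈ g.dom :=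
  ⟨e.toPartialEquiv.domRestrict (le_top : f.dom ⊔ closure L {m} ≤ ⊤),
    hfg.sup (fg_closure_singleton m), le_domRestrict _ _ le_sup_left _ hf,
    domRestrict_le _ _, (le_sup_right : closure L {m} ≤ _) (subset_closure rfl)⟩

theorem exists_equiv_le_of_forth_of_back [Countable M] [Countable N]
    (P : Set (M ≃ₚ[L] N)) {f₀ : M ≃ₚ[L] N} (hf₀ : f₀ ∈ P)
    (forth : ∀ f ∈ P, ∀ m : M, ∃ g ∈ P, f ≤ g ∧ m ∈ g.dom)
    (back : ∀ f ∈ P, ∀ n : N, ∃ g ∈ P, f ≤ g ∧ n ∈ g.cod) :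
    ∃ e : M ≃[L] N, f₀ ≤ e.toEmbedding.toPartialEquiv := by
  have := Encodable.ofCountable (M ⊕ N)
  let D : M ⊕ N → Order.Cofinal P := Sum.elim
    (fun m ↦ ⟨{f | m ∈ f.1.dom}, fun f ↦
      let ⟨g, hg, hfg, hm⟩ := forth f f.2 m; ⟨⟨g, hg⟩, hm, hfg⟩⟩)
    (fun n ↦ ⟨{f | n ∈ f.1.cod}, fun f ↦
      let ⟨g, hg, hfg, hn⟩ := back f f.2 n; ⟨⟨g, hg⟩, hn, hfg⟩⟩)
  let S : ℕ →o M ≃ₚ[L] N :=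
    ⟨Subtype.val ∘ Order.sequenceOfCofinals ⟨f₀, hf₀⟩ D,
      (Subtype.mono_coe _).comp (Order.sequenceOfCofinals.monotone _ _)⟩
  have le_limit := DirectLimit.le_partialEquivLimit S
  have dom_top : (DirectLimit.partialEquivLimit S).dom = ⊤ := eq_top_iff.2 fun m _ ↦
    dom_le_dom (le_limit _) (Order.sequenceOfCofinals.encode_mem _ D (Sum.inl m))
  have cod_top : (DirectLimit.partialEquivLimit S).cod = ⊤ := eq_top_iff.2 fun n _ ↦
    cod_le_cod (le_limit _) (Order.sequenceOfCofinals.encode_mem _ D (Sum.inr n))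
  refine ⟨toEquivOfEqTop dom_top cod_top, ?_⟩
  rw [toEquivOfEqTop_toEmbedding, Embedding.toPartialEquiv_toEmbedding]
  exact le_limit 0

end PartialEquiv

namespace Substructure

variable {N : Type*} [L.Structure N]

/-- For countable `A ≤ B` this is `A ≼_{∞,ω} B`. -/
def IsoFixingTuples (A B : L.Substructure N) : Prop :=
  ∀ (k : ℕ) (a : Fin k → A), ∃ g : A ≃[L] B, ∀ i, (g (a i) : N) = a i

namespace IsoFixingTuples

variable {A B C : L.Substructure N}

protected theorem refl (A : L.Substructure N) : IsoFixingTuples A A :=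
  fun _ _ ↦ ⟨.refl L A, fun _ ↦ rfl⟩

protected theorem trans (hAB : IsoFixingTuples A B) (hBC : IsoFixingTuples B C) :
    IsoFixingTuples A C := by
  intro k a
  obtain ⟨g, hg⟩ := hAB k a
  obtain ⟨h, hh⟩ := hBC k (g ∘ a)
  exact ⟨h.comp g, fun i ↦ (hh i).trans (hg i)⟩

theorem exists_fixing_of_fg (h : IsoFixingTuples A B) {S : L.Substructure A} (hS : S.FG) :
    ∃ g : A ≃[L] B, ∀ x ∈ S, (g x : N) = x := by
  obtain ⟨s, hs, rfl⟩ := fg_def.1 hS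
  obtain ⟨k, a, -, rfl⟩ := hs.fin_param
  obtain ⟨g, hg⟩ := h k a
  have fixes_range : Set.EqOn (B.subtype.toHom.comp g.toHom) A.subtype.toHom (Set.range a) := by
    rintro _ ⟨i, rfl⟩
    exact hg i
  exact ⟨g, fun x hx ↦ Hom.eqOn_closure fixes_range hx⟩

end IsoFixingTuples

section Chain

variable {ι : Type*} [LinearOrder ι] {M : ι → L.Substructure N} {α γ : ι}

def IsRestrictionBelow (M : ι → L.Substructure N) (γ : ι) (f : M α ≃ₚ[L] M γ) : Prop :=
  f.dom.FG ∧ ∃ ε < γ, ∃ (g : M α ≃[L] M ε) (hε : M ε ≤ M γ),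
    f ≤ ((inclusion hε).comp g.toEmbedding).toPartialEquiv

theorem IsRestrictionBelow.exists_le_mem_dom {f : M α ≃ₚ[L] M γ} (hf : IsRestrictionBelow M γ f)
    (m : M α) : ∃ g, IsRestrictionBelow M γ g ∧ f ≤ g ∧ m ∈ g.dom := by
  obtain ⟨hfin, ε, hεγ, g, hε, hfg⟩ := hf
  obtain ⟨f', hf'fg, hff', hf'le, hm⟩ :=
    PartialEquiv.exists_fg_le_le_toPartialEquiv_mem_dom hfin hfg m
  exact ⟨f', ⟨hf'fg, ε, hεγ, g, hε, hf'le⟩, hff', hm⟩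

theorem IsRestrictionBelow.exists_le_mem_cod (hmono : MonotoneOn M (Set.Iic γ))
    (hcont : ∀ x ∈ M γ, ∃ ε < γ, x ∈ M ε)
    (IH : ∀ ε ε', ε ≤ ε' → ε' < γ → IsoFixingTuples (M ε) (M ε'))
    {f : M α ≃ₚ[L] M γ} (hf : IsRestrictionBelow M γ f) (y : M γ) :
    ∃ g, IsRestrictionBelow M γ g ∧ f ≤ g ∧ y ∈ g.cod := by
  obtain ⟨hfin, ε, hεγ, g, hε, hfg⟩ := hf
  obtain ⟨ρ, hργ, hyρ⟩ := hcont y y.2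
  set ε' := max ε ρ
  have hε'γ : ε' < γ := max_lt hεγ hργ
  have hε' : M ε' ≤ M γ := hmono hε'γ.le le_rfl hε'γ.le
  obtain ⟨h, hh⟩ := (IH ε ε' (le_max_left ε ρ) hε'γ).exists_fixing_of_fg (hfin.map g.toHom)
  let e := (inclusion hε').comp (h.comp g).toEmbedding
  have hfe : f ≤ e.toPartialEquiv := by
    refine PartialEquiv.le_toPartialEquiv_iff.2 fun x ↦ Subtype.ext ?_
    calc (h (g x) : N) = g x := hh _ ⟨x, x.2, rfl⟩
      _ = f.toEquiv x := congrArg Subtype.val (PartialEquiv.le_toPartialEquiv_iff.1 hfg x)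
  obtain ⟨f', hf'fg, hff', hf'le, hm⟩ :=
    PartialEquiv.exists_fg_le_le_toPartialEquiv_mem_dom hfin hfe
      ((h.comp g).symm ⟨y, hmono hργ.le hε'γ.le (le_max_right ε ρ) hyρ⟩)
  refine ⟨f', ⟨hf'fg, ε', hε'γ, h.comp g, hε', hf'le⟩, hff', ?_⟩
  convert PartialEquiv.apply_mem_cod_of_le_toPartialEquiv hf'le hm
  simp [e]

theorem isoFixingTuples_of_forall_lt [Countable (M α)] [Countable (M γ)] (hαγ : α < γ)
    (hmono : MonotoneOn M (Set.Iic γ)) (hcont : ∀ x ∈ M γ, ∃ ε < γ, x ∈ M ε)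
    (IH : ∀ ε ε', ε ≤ ε' → ε' < γ → IsoFixingTuples (M ε) (M ε')) :
    IsoFixingTuples (M α) (M γ) := by
  intro k a
  have hα : M α ≤ M γ := hmono hαγ.le le_rfl hαγ.le
  let f₀ := (inclusion hα).toPartialEquiv.domRestrict (le_top : closure L (Set.range a) ≤ ⊤)
  have hf₀ : IsRestrictionBelow M γ f₀ :=
    ⟨fg_closure (Set.finite_range a), α, hαγ, .refl L _, hα, PartialEquiv.domRestrict_le _ _⟩
  obtain ⟨e, he⟩ := PartialEquiv.exists_equiv_le_of_forth_of_back {f | IsRestrictionBelow M γ f}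
    hf₀ (fun f hf ↦ hf.exists_le_mem_dom) (fun f hf ↦ hf.exists_le_mem_cod hmono hcont IH)
  refine ⟨e, fun i ↦ ?_⟩
  have hi : a i ∈ f₀.dom := subset_closure (Set.mem_range_self i)
  have h₁ := PartialEquiv.le_toPartialEquiv_iff.1 he ⟨a i, hi⟩
  have h₂ := PartialEquiv.le_toPartialEquiv_iff.1 (PartialEquiv.domRestrict_le _ _) ⟨a i, hi⟩
  exact congrArg Subtype.val (h₁.trans h₂.symm)

end Chain

end Substructure

end FirstOrder.Language

/-- Transfinite chain principle: if `(M_α)_{α≤β}` is a continuous increasing chain of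
countable substructures of `N` (continuous meaning that at limit stages `γ ≤ β` the model
`M_γ` is the union of the earlier ones), and for every `α < β` every finite tuple of `M_α`
is fixed by some isomorphism `M_α ≅ M_{α+1}`, then for every `α ≤ β` every finite tuple of
`M_α` is fixed by some isomorphism `M_α ≅ M_β`. -/
theorem transfinite_chain_iso {L : FirstOrder.Language} {N : Type*} [L.Structure N]
    (β : Ordinal) (M : Ordinal → L.Substructure N)
    (hmono : ∀ α α' : Ordinal, α ≤ α' → α' ≤ β → M α ≤ M α')
    (hcont : ∀ γ : Ordinal, γ ≤ β → Order.IsSuccLimit γ →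
      ∀ x : N, x ∈ M γ ↔ ∃ α < γ, x ∈ M α)
    (hcount : ∀ α : Ordinal, α ≤ β → Countable (M α))
    (hstep : ∀ α : Ordinal, α < β → ∀ (k : ℕ) (a : Fin k → M α),
      ∃ f : (M α) ≃[L] (M (α + 1)), ∀ i, (f (a i) : N) = (a i : N)) :
    ∀ α : Ordinal, α ≤ β → ∀ (k : ℕ) (a : Fin k → M α),
      ∃ g : (M α) ≃[L] (M β), ∀ i, (g (a i) : N) = (a i : N) := by
  suffices ∀ o ≤ β, ∀ α ≤ o, Substructure.IsoFixingTuples (M α) (M o) from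
    fun α hα ↦ this β le_rfl α hα
  intro o
  induction o using WellFoundedLT.induction with | _ o IH => ?_
  intro hoβ α hαo
  rcases hαo.eq_or_lt with rfl | hαo
  · exact .refl _
  rcases Ordinal.zero_or_succ_or_isSuccLimit o with rfl | ⟨s, rfl⟩ | hlim
  · exact (not_lt_zero hαo).elim
  · have hsβ : s < β := (Order.lt_succ s).trans_le hoβ
    rw [Order.succ_eq_add_one]
    exact (IH s (Order.lt_succ s) hsβ.le α (Order.lt_succ_iff.1 hαo)).trans (hstep s hsβ)
  · have := hcount α (hαo.le.trans hoβ)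
    have := hcount o hoβ
    exact Substructure.isoFixingTuples_of_forall_lt hαo
      (fun _ _ _ hε' hle ↦ hmono _ _ hle (hε'.trans hoβ)) (fun x ↦ (hcont o hoβ hlim x).1)
      (fun ε ε' hε hε' ↦ IH ε' hε' (hε'.le.trans hoβ) ε hε)
end

section
/- Let L be a countable first-order language, N an L-structure, and A ⊆ N a countable subset. Then there exists a countable elementary substructure M ≼ N with A ⊆ M such that M is an na-substructure of N: for every finite subset F ⊆ M and every L-formula φ(x, f̄) with parameters f̄ from F, if there exists c ∈ N \ M with N ⊨ φ(c, f̄), then there exists c′ ∈ M with N ⊨ φ(c′, f̄) and c′ ∉ acl(F). -/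
open FirstOrder FirstOrder.Language

/-- `b` is algebraic over the finite tuple `f̄`: some formula `α(x, f̄)` satisfied by `b` has
only finitely many solutions in `N`. -/
def AlgebraicOver (L : FirstOrder.Language) (N : Type*) [L.Structure N] {k : ℕ}
    (f : Fin k → N) (b : N) : Prop :=
  ∃ α : L.Formula (Fin (k + 1)), α.Realize (Fin.cons b f) ∧
    {x : N | α.Realize (Fin.cons x f)}.Finite

/-!
In an elementary substructure `M ≼ N` every finite set definable over `M` lies in `M`: elementarity
puts one of its points in `M`, and removing that point (a new parameter from `M`) lowers the size.
So an element of `N \ M` is never algebraic over parameters from `M`, and it suffices to make `M`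
contain a non-algebraic solution of `φ(x, f̄)` whenever `N` has one. Choosing such solutions gives
countably many finitary functions on `N`; closing `A` under them and under Skolem functions yields
the required countable elementary substructure.
-/

namespace FirstOrder.Language

variable {L : Language} {k : ℕ}

namespace Formula

def exCons (φ : L.Formula (Fin (k + 1))) : L.Formula (Fin k) :=
  (BoundedFormula.relabel (Fin.cons (Sum.inr 0) Sum.inl) φ).ex

def andNeParam (φ : L.Formula (Fin (k + 1))) : L.Formula (Fin (k + 2)) :=
  φ.relabel (Fin.cons 0 (Fin.succ ∘ Fin.succ)) ⊓ ∼((Term.var 0).equal (Term.var 1))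

variable {M : Type*} [L.Structure M] {φ : L.Formula (Fin (k + 1))} {f : Fin k → M}

@[simp]
theorem realize_exCons : φ.exCons.Realize f ↔ ∃ a, φ.Realize (Fin.cons a f) := by
  simp only [exCons, Formula.Realize, BoundedFormula.realize_ex, BoundedFormula.realize_relabel]
  refine exists_congr fun a => Iff.of_eq ?_
  congr 1
  · ext i
    refine Fin.cases ?_ (fun j => ?_) i <;> simp [Fin.snoc]
  · ext i; exact i.elim0

@[simp]
theorem realize_andNeParam {x b : M} :
    φ.andNeParam.Realize (Fin.cons x (Fin.cons b f)) ↔ φ.Realize (Fin.cons x f) ∧ x ≠ b := by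
  have : (Fin.cons x (Fin.cons b f) : Fin (k + 2) → M) ∘ Fin.cons 0 (Fin.succ ∘ Fin.succ) =
      Fin.cons x f := by
    ext i
    refine Fin.cases ?_ (fun j => ?_) i <;> simp
  simp [andNeParam, this]

end Formula

namespace ElementarySubstructure

variable {N : Type*} [L.Structure N] (M : L.ElementarySubstructure N) {f : Fin k → N}

theorem exists_mem_realize_cons (hf : ∀ i, f i ∈ M) {φ : L.Formula (Fin (k + 1))}
    (h : ∃ c, φ.Realize (Fin.cons c f)) : ∃ b ∈ M, φ.Realize (Fin.cons b f) := by
  let fM : Fin k → M := fun i => ⟨f i, hf i⟩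
  have hN : φ.exCons.Realize (((↑) : M → N) ∘ fM) := Formula.realize_exCons.2 h
  obtain ⟨b, hb⟩ := Formula.realize_exCons.1 ((M.subtype.map_formula _ _).1 hN)
  refine ⟨b, b.2, ?_⟩
  rwa [← M.subtype.map_formula, Fin.comp_cons] at hb

theorem mem_of_realize_of_finite (hf : ∀ i, f i ∈ M) {φ : L.Formula (Fin (k + 1))}
    (hfin : {x | φ.Realize (Fin.cons x f)}.Finite) {x : N} (hx : φ.Realize (Fin.cons x f)) :
    x ∈ M := by
  induction hn : {x | φ.Realize (Fin.cons x f)}.ncard generalizing k with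
  | zero =>
    rw [Set.ncard_eq_zero hfin] at hn
    exact absurd hx (Set.eq_empty_iff_forall_notMem.1 hn x)
  | succ n ih =>
    obtain ⟨b, hbM, hb⟩ := M.exists_mem_realize_cons hf ⟨x, hx⟩
    by_cases hxb : x = b
    · exact hxb ▸ hbM
    have hsol : {y | φ.andNeParam.Realize (Fin.cons y (Fin.cons b f))} =
        {y | φ.Realize (Fin.cons y f)} \ {b} := by
      ext y; simp
    refine ih (f := Fin.cons b f) (Fin.cases hbM hf) (hsol ▸ hfin.sdiff)
      (Formula.realize_andNeParam.2 ⟨hx, hxb⟩) ?_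
    rw [hsol, Set.ncard_sdiff_singleton_of_mem (s := {y | φ.Realize (Fin.cons y f)}) hb, hn,
      Nat.add_sub_cancel]

end ElementarySubstructure
end FirstOrder.Language

theorem AlgebraicOver.mem_elementarySubstructure {L : Language} {N : Type*} [L.Structure N]
    {M : L.ElementarySubstructure N} {k : ℕ} {f : Fin k → N} (hf : ∀ i, f i ∈ M) {b : N}
    (hb : AlgebraicOver L N f b) : b ∈ M :=
  let ⟨_, hα, hfin⟩ := hb
  M.mem_of_realize_of_finite hf hfin hα

namespace FirstOrder.Language

variable {L L' : Language}

instance countable_functions_sum [Countable (Σ l, L.Functions l)]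
    [Countable (Σ l, L'.Functions l)] : Countable (Σ l, (L.sum L').Functions l) :=
  Countable.of_equiv _ (Equiv.sigmaSumDistrib L.Functions L'.Functions).symm

instance countable_functions_skolem₁ [Countable L.Symbols] :
    Countable (Σ l, L.skolem₁.Functions l) :=
  (Nat.succ_injective.sigma_map
    (f₂ := fun l (φ : L.BoundedFormula Empty (l + 1)) => φ) fun _ => Function.injective_id).countable

variable {N : Type*} [L.Structure N] [L'.Structure N]

theorem exists_countable_elementarySubstructure_closed_under_funMap [Countable L.Symbols]
    [Countable (Σ l, L'.Functions l)] [Nonempty N] {A : Set N} (hA : A.Countable) :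
    ∃ M : L.ElementarySubstructure N, Countable M ∧ A ⊆ M ∧
      ∀ {k} (F : L'.Functions k) (f : Fin k → N), (∀ i, f i ∈ M) → Structure.funMap F f ∈ M := by
  let S := Substructure.closure ((L.sum L.skolem₁).sum L') A
  exact ⟨(LHom.sumInl.substructureReduct S).elementarySkolem₁Reduct,
    hA.substructure_closure _, Substructure.subset_closure,
    fun F f hf => S.fun_mem (Sum.inr F) f hf⟩

def naWitnessLanguage (L : Language) : Language :=
  ⟨fun k => L.Formula (Fin (k + 1)), fun _ => Empty⟩

-- `Classical.epsilon` picks an arbitrary point when `φ(x, f̄)` has no non-algebraic solution.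
noncomputable instance [Nonempty N] : (naWitnessLanguage L).Structure N :=
  ⟨fun φ f => Classical.epsilon fun b : N =>
    Formula.Realize (L := L) φ (Fin.cons b f) ∧ ¬ AlgebraicOver L N f b, fun r => Empty.elim r⟩

instance [Countable L.Symbols] : Countable (Σ l, (naWitnessLanguage L).Functions l) :=
  inferInstanceAs (Countable (Σ l, L.Formula (Fin (l + 1))))

end FirstOrder.Language

/-- For a countable language `L`, any countable subset `A` of an `L`-structure `N` is
contained in a countable elementary substructure `M ≼ N` which is moreover an
na-substructure: for every finite tuple `f̄` from `M` and every formula `φ(x, f̄)`, if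
`φ(x, f̄)` has a solution in `N \ M`, then it has a solution in `M` that is not algebraic
over `f̄`. -/
theorem exists_countable_na_substructure {L : FirstOrder.Language} [Countable L.Symbols]
    {N : Type*} [L.Structure N] [Nonempty N] (A : Set N) (hA : A.Countable) :
    ∃ M : L.ElementarySubstructure N, Countable M ∧ A ⊆ (M : Set N) ∧
      ∀ (k : ℕ) (f : Fin k → N), (∀ i, f i ∈ M) →
        ∀ φ : L.Formula (Fin (k + 1)),
          (∃ c : N, c ∉ M ∧ φ.Realize (Fin.cons c f)) →
          ∃ c' : N, c' ∈ M ∧ φ.Realize (Fin.cons c' f) ∧ ¬ AlgebraicOver L N f c' := by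
  obtain ⟨M, hMc, hAM, hM⟩ :=
    exists_countable_elementarySubstructure_closed_under_funMap (L := L)
      (L' := naWitnessLanguage L) hA
  refine ⟨M, hMc, hAM, fun k f hf φ ⟨c, hcM, hc⟩ => ?_⟩
  have hna : ∃ b, φ.Realize (Fin.cons b f) ∧ ¬ AlgebraicOver L N f b :=
    ⟨c, hc, fun halg => hcM (halg.mem_elementarySubstructure hf)⟩
  exact ⟨_, hM (show (naWitnessLanguage L).Functions k from φ) f hf, Classical.epsilon_spec hna⟩
end
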